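/- (Multidimensional positive maximum principle.) Let d, m ≥ 1, let S = S^(1) × … × S^(d) ⊆ ℝ^d where each factor S^(i) is either ℝ or [0,∞). Let B : ℝ^d → ℝ^d and Σ : ℝ^d → ℝ^{d×m} be maps, let f : ℝ^d → ℝ be twice continuously differentiable with compact support, and define the generator (Hf)(x) := ∑_{i=1}^d B(x)_i ∂_i f(x) + (1/2) ∑_{i,j=1}^d (Σ(x)Σ(x)ᵀ)_{ij} ∂_i∂_j f(x). Suppose x₀ ∈ S satisfies f(x₀) = sup_{x ∈ S} f(x), and let I(x₀) := { i ∈ {1,…,d} : (x₀)_i = 0 and S^(i) = [0,∞) }. If for every i ∈ I(x₀) one has B(x₀)_i ≥ 0 and (Σ(x₀)Σ(x₀)ᵀ)_{ij} = 0 for all j ∈ {1,…,d}, then (Hf)(x₀) ≤ 0. -/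

import Mathlib

/-!
At a coordinate where `x₀` lies in the interior of its factor, `f` has a local maximum along the
coordinate line, so `∂ᵢf(x₀) = 0`; at an active boundary coordinate `S` contains the ray
`x₀ + t eᵢ`, `t ≥ 0`, so `∂ᵢf(x₀) ≤ 0` while `B(x₀)ᵢ ≥ 0`. For the second-order part,
`∑ᵢⱼ (ΣΣᵀ)ᵢⱼ ∂ᵢ∂ⱼf(x₀) = ∑ₖ D²f(x₀)(σₖ, σₖ)` with `σₖ` the columns of `Σ(x₀)`. As
`(ΣΣᵀ)ᵢᵢ = ∑ₖ Σᵢₖ²` vanishes at active coordinates, every `σₖ` points along the boundary, so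
`t ↦ f(x₀ + t σₖ)` has a local maximum at `0` and the one-dimensional second-derivative test
gives `D²f(x₀)(σₖ, σₖ) ≤ 0`.
-/

open Matrix Filter Set Topology

/-- If `g'' (a) > 0`, the sufficient second-derivative test makes `a` a local minimum as well, so
`g` is locally constant and `g'' (a) = 0`. -/
theorem IsLocalMax.deriv_deriv_nonpos {g : ℝ → ℝ} {a : ℝ} (h : IsLocalMax g a)
    (hg : ContinuousAt g a) : deriv (deriv g) a ≤ 0 := by
  by_contra! hpos
  have hconst : g =ᶠ[𝓝 a] fun _ => g a :=
    (h.and (isLocalMin_of_deriv_deriv_pos hpos h.deriv_eq_zero hg)).mono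
      fun t ht => le_antisymm ht.1 ht.2
  have hderiv : deriv g =ᶠ[𝓝 a] fun _ => 0 := by simpa using hconst.deriv
  simp [hderiv.deriv_eq] at hpos

section Line

variable {E : Type*} [NormedAddCommGroup E] [NormedSpace ℝ E] {f : E → ℝ} {x v : E}

theorem hasDerivAt_add_smul (x v : E) (t : ℝ) : HasDerivAt (fun s : ℝ => x + s • v) v t := by
  simpa using ((hasDerivAt_id t).smul_const v).const_add x

theorem hasDerivAt_comp_add_smul {t : ℝ} (hf : DifferentiableAt ℝ f (x + t • v)) :
    HasDerivAt (fun s : ℝ => f (x + s • v)) (fderiv ℝ f (x + t • v) v) t :=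
  hf.hasFDerivAt.comp_hasDerivAt t (hasDerivAt_add_smul x v t)

theorem IsMaxOn.isLocalMax_comp_add_smul {S : Set E} (h : IsMaxOn f S x)
    (hv : ∀ᶠ t in 𝓝 (0 : ℝ), x + t • v ∈ S) : IsLocalMax (fun t : ℝ => f (x + t • v)) 0 :=
  hv.mono fun t ht => by simpa using h ht

theorem IsMaxOn.fderiv_apply_nonpos {S : Set E} (h : IsMaxOn f S x) (hf : DifferentiableAt ℝ f x)
    (hv : ∀ᶠ t in 𝓝[>] (0 : ℝ), x + t • v ∈ S) : fderiv ℝ f x v ≤ 0 :=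
  h.localize.hasFDerivWithinAt_nonpos hf.hasFDerivAt.hasFDerivWithinAt
    (mem_posTangentConeAt_of_frequently_mem hv.frequently)

theorem IsMaxOn.fderiv_apply_eq_zero {S : Set E} (h : IsMaxOn f S x)
    (hf : DifferentiableAt ℝ f x) (hv : ∀ᶠ t in 𝓝 (0 : ℝ), x + t • v ∈ S) :
    fderiv ℝ f x v = 0 :=
  (h.isLocalMax_comp_add_smul hv).hasDerivAt_eq_zero <| by
    simpa using hasDerivAt_comp_add_smul (f := f) (v := v) (t := 0) (by rwa [zero_smul, add_zero])

theorem IsMaxOn.fderiv_fderiv_apply_nonpos {S : Set E} (h : IsMaxOn f S x)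
    (hf : Differentiable ℝ f) (hf' : DifferentiableAt ℝ (fderiv ℝ f) x)
    (hv : ∀ᶠ t in 𝓝 (0 : ℝ), x + t • v ∈ S) : fderiv ℝ (fderiv ℝ f) x v v ≤ 0 := by
  have hderiv : deriv (fun t : ℝ => f (x + t • v)) = fun t => fderiv ℝ f (x + t • v) v :=
    funext fun t => (hasDerivAt_comp_add_smul (hf _)).deriv
  have hderiv2 :
      HasDerivAt (fun t : ℝ => fderiv ℝ f (x + t • v) v) (fderiv ℝ (fderiv ℝ f) x v v) 0 := by
    have hf'' : DifferentiableAt ℝ (fderiv ℝ f) (x + (0 : ℝ) • v) := by rwa [zero_smul, add_zero]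
    have := ((ContinuousLinearMap.apply ℝ ℝ v).hasFDerivAt.comp _
      hf''.hasFDerivAt).comp_hasDerivAt 0 (hasDerivAt_add_smul x v 0)
    simp only [zero_smul, add_zero] at this
    exact this
  have := (h.isLocalMax_comp_add_smul hv).deriv_deriv_nonpos
    (hf.continuous.comp (by fun_prop)).continuousAt
  rwa [hderiv, hderiv2.deriv] at this

end Line

section Coordinates

variable {ι : Type*}

theorem ContinuousLinearMap.apply_apply_eq_sum_single [Fintype ι] [DecidableEq ι]
    (Q : (ι → ℝ) →L[ℝ] (ι → ℝ) →L[ℝ] ℝ)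
    (v w : ι → ℝ) : Q v w = ∑ i, ∑ j, v i * w j * Q (Pi.single i 1) (Pi.single j 1) := by
  have hsingle (u : ι → ℝ) : u = ∑ i, u i • (Pi.single i 1 : ι → ℝ) := by
    simpa [← Pi.single_smul'] using (Finset.univ_sum_single u).symm
  conv_lhs => rw [hsingle v, hsingle w]
  simp only [map_sum, map_smul, _root_.sum_apply, _root_.smul_apply, smul_eq_mul, Finset.mul_sum]
  rw [Finset.sum_comm]
  exact Finset.sum_congr rfl fun i _ => Finset.sum_congr rfl fun j _ => by ring

theorem ContinuousLinearMap.sum_mul_transpose_mul_apply_single [Fintype ι] [DecidableEq ι]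
    {κ : Type*} [Fintype κ] (Q : (ι → ℝ) →L[ℝ] (ι → ℝ) →L[ℝ] ℝ) (M : Matrix ι κ ℝ) :
    ∑ i, ∑ j, (M * Mᵀ) i j * Q (Pi.single i 1) (Pi.single j 1) = ∑ k, Q (Mᵀ k) (Mᵀ k) :=
  calc ∑ i, ∑ j, (M * Mᵀ) i j * Q (Pi.single i 1) (Pi.single j 1)
      = ∑ i, ∑ j, ∑ k, M i k * M j k * Q (Pi.single i 1) (Pi.single j 1) := by
        simp only [Matrix.mul_apply, Matrix.transpose_apply, Finset.sum_mul]
    _ = ∑ k, ∑ i, ∑ j, M i k * M j k * Q (Pi.single i 1) (Pi.single j 1) :=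
        (Finset.sum_congr rfl fun i _ => Finset.sum_comm).trans Finset.sum_comm
    _ = ∑ k, Q (Mᵀ k) (Mᵀ k) :=
        Finset.sum_congr rfl fun k _ => (Q.apply_apply_eq_sum_single _ _).symm

variable {F : ι → Set ℝ} {x : ι → ℝ}

theorem eventually_add_smul_mem_univ_pi [Finite ι] {v : ι → ℝ} (hx : x ∈ univ.pi F)
    (hv : ∀ i, x i ∉ interior (F i) → v i = 0) :
    ∀ᶠ t in 𝓝 (0 : ℝ), x + t • v ∈ univ.pi F := by
  simp only [mem_univ_pi, eventually_all]
  intro i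
  by_cases hi : x i ∈ interior (F i)
  · have hline : Tendsto (fun t : ℝ => x i + t * v i) (𝓝 0) (𝓝 (x i)) := by
      simpa using (Continuous.tendsto (by fun_prop) (0 : ℝ) :
        Tendsto (fun t : ℝ => x i + t * v i) _ _)
    exact (hline.eventually_mem (isOpen_interior.mem_nhds hi)).mono fun t ht => interior_subset ht
  · exact Eventually.of_forall fun t => by simpa [hv i hi] using hx i trivial

theorem eventually_add_smul_single_mem_univ_pi [DecidableEq ι] {i : ι} (hx : x ∈ univ.pi F)
    (hi : Ici (x i) ⊆ F i) : ∀ᶠ t in 𝓝[>] (0 : ℝ), x + t • Pi.single i 1 ∈ univ.pi F := by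
  filter_upwards [self_mem_nhdsWithin] with t (ht : 0 < t)
  have hupdate : x + t • Pi.single i 1 = Function.update x i (x i + t) := by
    ext j
    rcases eq_or_ne j i with rfl | hj <;> simp [*]
  rw [hupdate, update_mem_pi_iff_of_mem hx]
  exact fun _ => hi (by simpa using ht.le)

end Coordinates

theorem Matrix.row_eq_zero_of_mul_transpose_self_apply_eq_zero {n m R : Type*} [Fintype m]
    [Ring R] [LinearOrder R] [IsStrictOrderedRing R] {M : Matrix n m R} {i : n}
    (h : (M * Mᵀ) i i = 0) : M i = 0 :=
  dotProduct_self_eq_zero.mp (by simpa [Matrix.mul_apply, dotProduct] using h)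

theorem eq_zero_and_eq_Ici_of_notMem_interior {s : Set ℝ} {a : ℝ} (hs : s = univ ∨ s = Ici 0)
    (ha : a ∈ s) (h : a ∉ interior s) : a = 0 ∧ s = Ici 0 := by
  rcases hs with rfl | rfl
  · simp at h
  · simp only [interior_Ici, mem_Ioi, not_lt] at h
    exact ⟨le_antisymm h ha, rfl⟩

theorem stmt_6_general (d m : ℕ)
    (F : Fin d → Set ℝ) (hF : ∀ i, F i = Set.univ ∨ F i = Set.Ici 0)
    (B : (Fin d → ℝ) → Fin d → ℝ)
    (Sg : (Fin d → ℝ) → Matrix (Fin d) (Fin m) ℝ)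
    (f : (Fin d → ℝ) → ℝ) (hf : ContDiff ℝ 2 f)
    (x₀ : Fin d → ℝ) (hx₀ : x₀ ∈ Set.univ.pi F)
    (hmax : ∀ x ∈ Set.univ.pi F, f x ≤ f x₀)
    (hbdry : ∀ i : Fin d, (x₀ i = 0 ∧ F i = Set.Ici 0) →
      0 ≤ B x₀ i ∧ ∀ j : Fin d, (Sg x₀ * (Sg x₀)ᵀ) i j = 0) :
    (∑ i : Fin d, B x₀ i * fderiv ℝ f x₀ (Pi.single i 1))
      + (1 / 2) * ∑ i : Fin d, ∑ j : Fin d, (Sg x₀ * (Sg x₀)ᵀ) i j *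
          fderiv ℝ (fun y => fderiv ℝ f y (Pi.single j 1)) x₀ (Pi.single i 1) ≤ 0 := by
  have hS : IsMaxOn f (univ.pi F) x₀ := hmax
  have hf₁ : Differentiable ℝ f := hf.differentiable (by norm_num)
  have hf₂ : Differentiable ℝ (fderiv ℝ f) := (hf.fderiv_right le_rfl).differentiable one_ne_zero
  have hactive (i) (hi : x₀ i ∉ interior (F i)) : x₀ i = 0 ∧ F i = Ici 0 :=
    eq_zero_and_eq_Ici_of_notMem_interior (hF i) (hx₀ i trivial) hi
  have hfirst : ∑ i, B x₀ i * fderiv ℝ f x₀ (Pi.single i 1) ≤ 0 := by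
    refine Finset.sum_nonpos fun i _ => ?_
    by_cases hi : x₀ i ∈ interior (F i)
    · rw [hS.fderiv_apply_eq_zero (hf₁ x₀) (eventually_add_smul_mem_univ_pi hx₀ fun j hj =>
        Pi.single_eq_of_ne (by rintro rfl; exact hj hi) 1), mul_zero]
    · obtain ⟨hx₀i, hFi⟩ := hactive i hi
      exact mul_nonpos_of_nonneg_of_nonpos (hbdry i ⟨hx₀i, hFi⟩).1 <| hS.fderiv_apply_nonpos
        (hf₁ x₀) (eventually_add_smul_single_mem_univ_pi hx₀ (by rw [hx₀i, hFi]))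
  have hsecond : ∑ i, ∑ j, (Sg x₀ * (Sg x₀)ᵀ) i j *
      fderiv ℝ (fun y => fderiv ℝ f y (Pi.single j 1)) x₀ (Pi.single i 1) ≤ 0 := by
    simp only [fderiv_clm_apply (hf₂ x₀) (differentiableAt_const _), fderiv_const_apply,
      ContinuousLinearMap.comp_zero, zero_add, ContinuousLinearMap.flip_apply]
    rw [ContinuousLinearMap.sum_mul_transpose_mul_apply_single]
    refine Finset.sum_nonpos fun k _ => hS.fderiv_fderiv_apply_nonpos hf₁ (hf₂ x₀) ?_
    exact eventually_add_smul_mem_univ_pi hx₀ fun i hi =>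
      congrFun (row_eq_zero_of_mul_transpose_self_apply_eq_zero ((hbdry i (hactive i hi)).2 i)) k
  linarith

/-- Multidimensional positive maximum principle on a product state space
`S = S⁽¹⁾ × ⋯ × S⁽ᵈ⁾` where each factor is either `ℝ` or `[0,∞)`.  The generator is
`(Hf)(x) = ∑ᵢ B(x)ᵢ ∂ᵢf(x) + (1/2) ∑ᵢⱼ (Σ(x)Σ(x)ᵀ)ᵢⱼ ∂ᵢ∂ⱼf(x)`, with partial derivatives
expressed via Fréchet derivatives in the direction of the standard basis vectors. -/
theorem stmt_6 (d m : ℕ) (hd : 0 < d) (hm : 0 < m)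
    (F : Fin d → Set ℝ) (hF : ∀ i, F i = Set.univ ∨ F i = Set.Ici 0)
    (B : (Fin d → ℝ) → Fin d → ℝ)
    (Sg : (Fin d → ℝ) → Matrix (Fin d) (Fin m) ℝ)
    (f : (Fin d → ℝ) → ℝ) (hf : ContDiff ℝ 2 f) (hfsupp : HasCompactSupport f)
    (x₀ : Fin d → ℝ) (hx₀ : x₀ ∈ Set.univ.pi F)
    (hmax : ∀ x ∈ Set.univ.pi F, f x ≤ f x₀)
    (hbdry : ∀ i : Fin d, (x₀ i = 0 ∧ F i = Set.Ici 0) →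
      0 ≤ B x₀ i ∧ ∀ j : Fin d, (Sg x₀ * (Sg x₀)ᵀ) i j = 0) :
    (∑ i : Fin d, B x₀ i * fderiv ℝ f x₀ (Pi.single i 1))
      + (1 / 2) * ∑ i : Fin d, ∑ j : Fin d, (Sg x₀ * (Sg x₀)ᵀ) i j *
          fderiv ℝ (fun y => fderiv ℝ f y (Pi.single j 1)) x₀ (Pi.single i 1) ≤ 0 :=
  stmt_6_general d m F hF B Sg f hf x₀ hx₀ hmax hbdry
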